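/- Let k ≥ 3 and let G be an r-regular k-partite k-uniform hypergraph with partition classes of order n. Then for every partition class Z, every vertex v ∈ Z, and every s ∈ ℕ, the number of 2-linked sets S ⊆ Z with v ∈ S and |S| = s is at most e·((k-1)e·r²)^{s-1}. -/

import Mathlib

/-- External neighbourhood of a vertex set `S` in a hypergraph with edge set `E`. -/
def hyperNbhd {V : Type*} [DecidableEq V] (E : Finset (Finset V)) (S : Finset V) :
    Finset V :=
  ((E.filter fun e => (e ∩ S).Nonempty).biUnion id) \ S

/-- The auxiliary graph `Z₂` on the partition class `Z`: two distinct vertices of `Z`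
are adjacent iff their external neighbourhoods intersect. -/
def Z2graph {V : Type*} [DecidableEq V] (E : Finset (Finset V)) (Z : Finset V) :
    SimpleGraph V where
  Adj u w := u ≠ w ∧ u ∈ Z ∧ w ∈ Z ∧ (hyperNbhd E {u} ∩ hyperNbhd E {w}).Nonempty
  symm := by
    constructor
    rintro u w ⟨h1, h2, h3, h4⟩
    exact ⟨h1.symm, h3, h2, by rwa [Finset.inter_comm]⟩
  loopless := by constructor; rintro u ⟨h1, -⟩; exact h1 rfl

/-! A vertex `u` of `Z` has at most `(k - 1) r` hypergraph neighbours, each lying in at most `r`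
edges that meet `Z` once, so `Z₂` has maximum degree `Δ ≤ (k - 1) r²`.

A connected `s`-set `S ∋ v` in a graph of maximum degree `Δ` is explored from `v`, adding one
vertex at a time; a new vertex is the `j`-th neighbour of the `i`-th explored vertex and is
recorded by the code `i Δ + j < s Δ`. Always taking the least available code makes the codes
increasing, so the `(s - 1)`-set of codes determines the exploration and hence `S`. There are
therefore at most `C(s Δ, s - 1) ≤ e (e Δ)^(s - 1)` such sets. -/

namespace SimpleGraph

variable {V : Type*} (G : SimpleGraph V) [G.LocallyFinite] (d : ℕ) (v₀ : V)

noncomputable def neighborList (u : V) : List V := (G.neighborFinset u).toList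

/-- `v₀` is only a default value for out-of-range indices. -/
noncomputable def codeTarget (L : List V) (m : ℕ) : V :=
  (G.neighborList (L.getD (m / d) v₀)).getD (m % d) v₀

variable {G d v₀}

lemma codeTarget_of_prefix {L L' : List V} (hL : L <+: L') {m : ℕ} (hm : m < L.length * d) :
    G.codeTarget d v₀ L' m = G.codeTarget d v₀ L m := by
  obtain ⟨L'', rfl⟩ := hL
  have hdiv : m / d < L.length := Nat.div_lt_of_lt_mul (by rwa [mul_comm] at hm)
  rw [codeTarget, codeTarget, List.getD_append _ _ _ _ hdiv]

lemma exists_codeTarget_eq (hd : ∀ u, G.degree u ≤ d) {L : List V} {a b : V} (ha : a ∈ L)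
    (hab : G.Adj a b) : ∃ m < L.length * d, G.codeTarget d v₀ L m = b := by
  classical
  have hb : b ∈ G.neighborList a := by simpa [neighborList] using hab
  have hi := List.idxOf_lt_length_iff.2 ha
  have hj : (G.neighborList a).idxOf b < d := by
    refine (List.idxOf_lt_length_iff.2 hb).trans_le ?_
    simpa [neighborList] using hd a
  refine ⟨d * L.idxOf a + (G.neighborList a).idxOf b, ?_, ?_⟩
  · nlinarith
  · have hd0 : 0 < d := by omega
    rw [codeTarget, Nat.mul_add_div hd0, Nat.div_eq_of_lt hj, add_zero, Nat.mul_add_mod,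
      Nat.mod_eq_of_lt hj, List.getD_eq_getElem _ _ hi, List.getElem_idxOf,
      List.getD_eq_getElem _ _ (List.idxOf_lt_length_iff.2 hb), List.getElem_idxOf]

variable (G d v₀) [DecidableEq V]

noncomputable def newCodes (S : Finset V) (L : List V) : Finset ℕ :=
  (Finset.range (L.length * d)).filter fun m =>
    G.codeTarget d v₀ L m ∈ S ∧ G.codeTarget d v₀ L m ∉ L

noncomputable def explore (S : Finset V) : ℕ → List V → List ℕ
  | 0, _ => []
  | t + 1, L =>
    if h : (G.newCodes d v₀ S L).Nonempty then
      (G.newCodes d v₀ S L).min' h ::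
        explore S t (L ++ [G.codeTarget d v₀ L ((G.newCodes d v₀ S L).min' h)])
    else []

noncomputable def replay (codes : List ℕ) (L : List V) : List V :=
  codes.foldl (fun L m => L ++ [G.codeTarget d v₀ L m]) L

variable {G d v₀} {S : Finset V}

lemma mem_newCodes {L : List V} {m : ℕ} :
    m ∈ G.newCodes d v₀ S L ↔
      m < L.length * d ∧ G.codeTarget d v₀ L m ∈ S ∧ G.codeTarget d v₀ L m ∉ L := by
  simp [newCodes]

lemma min'_newCodes_lt {L L' : List V} (h : (G.newCodes d v₀ S L).Nonempty)
    (hL' : L ++ [G.codeTarget d v₀ L ((G.newCodes d v₀ S L).min' h)] <+: L') {m : ℕ}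
    (hm : m ∈ G.newCodes d v₀ S L') : (G.newCodes d v₀ S L).min' h < m := by
  set m₀ := (G.newCodes d v₀ S L).min' h
  have hL : L <+: L' := (L.prefix_append _).trans hL'
  by_contra! hle
  have hm₀ := mem_newCodes.1 ((G.newCodes d v₀ S L).min'_mem h)
  rw [mem_newCodes] at hm
  have hlt : m < L.length * d := hle.trans_lt hm₀.1
  rw [codeTarget_of_prefix hL hlt] at hm
  have hmL : m ∈ G.newCodes d v₀ S L :=
    mem_newCodes.2 ⟨hlt, hm.2.1, fun hmem => hm.2.2 (hL.subset hmem)⟩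
  obtain rfl : m = m₀ := hle.antisymm ((G.newCodes d v₀ S L).min'_le m hmL)
  exact hm.2.2 (hL'.subset (by simp))

lemma exists_prefix_of_mem_explore :
    ∀ {t : ℕ} {L : List V} {m : ℕ}, m ∈ G.explore d v₀ S t L →
      ∃ L', L <+: L' ∧ L'.length < L.length + t ∧ m ∈ G.newCodes d v₀ S L'
  | 0, _, _, hm => by simp [explore] at hm
  | t + 1, L, m, hm => by
    rw [explore] at hm
    split_ifs at hm with h
    · rcases List.mem_cons.1 hm with rfl | hm
      · exact ⟨L, L.prefix_refl, by omega, Finset.min'_mem _ h⟩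
      · obtain ⟨L', hL', hlen, hm'⟩ := exists_prefix_of_mem_explore hm
        exact ⟨L', (L.prefix_append _).trans hL', by simp at hlen; omega, hm'⟩
    · simp at hm

lemma pairwise_explore : ∀ (t : ℕ) (L : List V), (G.explore d v₀ S t L).Pairwise (· < ·)
  | 0, _ => by simp [explore]
  | t + 1, L => by
    rw [explore]
    split_ifs with h
    · refine List.pairwise_cons.2 ⟨fun m hm => ?_, pairwise_explore t _⟩
      obtain ⟨L', hL', -, hm'⟩ := exists_prefix_of_mem_explore hm
      exact min'_newCodes_lt h hL' hm'
    · simp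

lemma newCodes_nonempty (hd : ∀ u, G.degree u ≤ d) (hS : (G.induce (S : Set V)).Connected)
    {L : List V} (hL : L ≠ []) (hLS : ∀ x ∈ L, x ∈ S) (hcard : L.toFinset.card < S.card) :
    (G.newCodes d v₀ S L).Nonempty := by
  obtain ⟨b₀, hb₀S, hb₀L⟩ := Finset.exists_mem_notMem_of_card_lt_card hcard
  have ha₀ := L.head_mem hL
  obtain ⟨p⟩ := hS.preconnected ⟨L.head hL, hLS _ ha₀⟩ ⟨b₀, hb₀S⟩
  obtain ⟨e, -, haL, hbL⟩ := p.exists_boundary_dart {x | (x : V) ∈ L} ha₀ (by simpa using hb₀L)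
  obtain ⟨m, hm, hmb⟩ := exists_codeTarget_eq (v₀ := v₀) hd haL e.adj
  exact ⟨m, mem_newCodes.2 ⟨hm, hmb ▸ e.toProd.2.2, hmb ▸ hbL⟩⟩

lemma length_explore_and_replay_toFinset (hd : ∀ u, G.degree u ≤ d)
    (hS : (G.induce (S : Set V)).Connected) :
    ∀ (t : ℕ) {L : List V}, L ≠ [] → L.Nodup → (∀ x ∈ L, x ∈ S) → L.length + t = S.card →
      (G.explore d v₀ S t L).length = t ∧ (G.replay d v₀ (G.explore d v₀ S t L) L).toFinset = S
  | 0, L, _, hnd, hLS, hlen => by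
    refine ⟨rfl, Finset.eq_of_subset_of_card_le (fun x hx => hLS x (List.mem_toFinset.1 hx)) ?_⟩
    rw [explore, replay, List.foldl_nil, List.toFinset_card_of_nodup hnd]
    omega
  | t + 1, L, hL, hnd, hLS, hlen => by
    have h := newCodes_nonempty (v₀ := v₀) hd hS hL hLS
      (by rw [List.toFinset_card_of_nodup hnd]; omega)
    obtain ⟨-, hxS, hxL⟩ := mem_newCodes.1 ((G.newCodes d v₀ S L).min'_mem h)
    have ih := length_explore_and_replay_toFinset hd hS t
      (L := L ++ [G.codeTarget d v₀ L ((G.newCodes d v₀ S L).min' h)])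
      (by simp) (hnd.append (List.nodup_singleton _) (List.disjoint_singleton.2 hxL))
      (fun x hx => (List.mem_append.1 hx).elim (hLS x) fun hx => List.mem_singleton.1 hx ▸ hxS)
      (by simp; omega)
    rw [explore, dif_pos h]
    exact ⟨by simp [ih.1], ih.2⟩

theorem ncard_le_choose_of_connected (hd : ∀ u, G.degree u ≤ d) (v : V) (s : ℕ)
    {A : Set (Finset V)}
    (hA : ∀ S ∈ A, v ∈ S ∧ S.card = s ∧ (G.induce (S : Set V)).Connected) :
    A.ncard ≤ (s * d).choose (s - 1) := by
  obtain _ | t := s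
  · rw [Set.eq_empty_of_forall_notMem fun S hS =>
      Finset.card_ne_zero_of_mem (hA S hS).1 (hA S hS).2.1, Set.ncard_empty]
    exact Nat.zero_le _
  have hspec : ∀ S ∈ A, (G.explore d v S t [v]).length = t ∧
      (G.replay d v (G.explore d v S t [v]) [v]).toFinset = S := by
    intro S hSA
    obtain ⟨hvS, hcard, hS⟩ := hA S hSA
    exact length_explore_and_replay_toFinset hd hS t (by simp) (by simp) (by simpa using hvS)
      (by simp [hcard, add_comm])
  have hmaps : ∀ S ∈ A, (G.explore d v S t [v]).toFinset ∈
      (Finset.range ((t + 1) * d)).powersetCard t := by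
    intro S hS
    refine Finset.mem_powersetCard.2 ⟨fun m hm => ?_, ?_⟩
    · obtain ⟨L', -, hlen, hm'⟩ := exists_prefix_of_mem_explore (List.mem_toFinset.1 hm)
      rw [List.length_singleton] at hlen
      exact Finset.mem_range.2 ((mem_newCodes.1 hm').1.trans_le (Nat.mul_le_mul_right d (by omega)))
    · rw [List.toFinset_card_of_nodup (pairwise_explore t [v]).nodup, (hspec S hS).1]
  have hinj : Set.InjOn (fun S => (G.explore d v S t [v]).toFinset) A := by
    intro S₁ hS₁ S₂ hS₂ heq
    dsimp only at heq
    have hcodes : G.explore d v S₁ t [v] = G.explore d v S₂ t [v] := by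
      rw [← (List.toFinset_sort (· ≤ ·) (pairwise_explore t [v]).nodup).2
          ((pairwise_explore t [v]).imp le_of_lt),
        ← (List.toFinset_sort (· ≤ ·) (pairwise_explore (S := S₂) t [v]).nodup).2
          ((pairwise_explore t [v]).imp le_of_lt), heq]
    rw [← (hspec S₁ hS₁).2, ← (hspec S₂ hS₂).2, hcodes]
  calc A.ncard ≤ ((Finset.range ((t + 1) * d)).powersetCard t : Set (Finset ℕ)).ncard :=
        Set.ncard_le_ncard_of_injOn _ hmaps hinj (Finset.finite_toSet _)
    _ = ((t + 1) * d).choose t := by simp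

end SimpleGraph

theorem Nat.choose_mul_le_exp_mul_pow (s d : ℕ) :
    ((s * d).choose (s - 1) : ℝ) ≤ Real.exp 1 * (Real.exp 1 * d) ^ (s - 1) := by
  obtain _ | t := s
  · simp
  have hexp : ((t + 1 : ℕ) : ℝ) ^ t / t.factorial ≤ Real.exp 1 ^ (t + 1) := by
    rw [Real.exp_one_pow]
    exact Real.pow_div_factorial_le_exp _ (by positivity) t
  calc (((t + 1) * d).choose t : ℝ) ≤ (((t + 1) * d : ℕ) : ℝ) ^ t / t.factorial :=
        Nat.choose_le_pow_div t _
    _ = ((t + 1 : ℕ) : ℝ) ^ t / t.factorial * (d : ℝ) ^ t := by rw [Nat.cast_mul, mul_pow]; ring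
    _ ≤ Real.exp 1 ^ (t + 1) * (d : ℝ) ^ t := by gcongr
    _ = Real.exp 1 * (Real.exp 1 * d) ^ t := by ring

section Hypergraph

variable {V : Type*} [DecidableEq V] {E : Finset (Finset V)} {k r : ℕ}

lemma Finset.card_le_of_forall_card_inter_le_one {e : Finset V} (parts : Fin k → Finset V)
    (hcover : ∀ v, ∃ i, v ∈ parts i) (he : ∀ i, (e ∩ parts i).card ≤ 1) : e.card ≤ k := by
  have hsub : e ⊆ Finset.univ.biUnion fun i => e ∩ parts i := fun v hv => by
    obtain ⟨i, hi⟩ := hcover v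
    exact Finset.mem_biUnion.2 ⟨i, Finset.mem_univ _, Finset.mem_inter.2 ⟨hv, hi⟩⟩
  simpa using (Finset.card_le_card hsub).trans
    (Finset.card_biUnion_le_card_mul _ _ 1 fun i _ => he i)

lemma hyperNbhd_singleton_subset (x : V) :
    hyperNbhd E {x} ⊆ (E.filter (x ∈ ·)).biUnion (·.erase x) := by
  intro y hy
  simp only [hyperNbhd, Finset.mem_sdiff, Finset.mem_biUnion, Finset.mem_filter, id,
    Finset.mem_singleton] at hy
  obtain ⟨⟨e, ⟨heE, z, hz⟩, hye⟩, hyx⟩ := hy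
  have hxe : x ∈ e := Finset.mem_singleton.1 (Finset.mem_inter.1 hz).2 ▸ (Finset.mem_inter.1 hz).1
  exact Finset.mem_biUnion.2 ⟨e, Finset.mem_filter.2 ⟨heE, hxe⟩, Finset.mem_erase.2 ⟨hyx, hye⟩⟩

lemma card_hyperNbhd_singleton_le (hedge : ∀ e ∈ E, e.card ≤ k)
    (hreg : ∀ v, (E.filter (v ∈ ·)).card ≤ r) (x : V) :
    (hyperNbhd E {x}).card ≤ r * (k - 1) := by
  have herase : ∀ e ∈ E.filter (x ∈ ·), (e.erase x).card ≤ k - 1 := fun e he => by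
    rw [Finset.mem_filter] at he
    rw [Finset.card_erase_of_mem he.2]
    exact Nat.sub_le_sub_right (hedge e he.1) 1
  calc (hyperNbhd E {x}).card ≤ ((E.filter (x ∈ ·)).biUnion (·.erase x)).card :=
        Finset.card_le_card (hyperNbhd_singleton_subset x)
    _ ≤ (E.filter (x ∈ ·)).card * (k - 1) := Finset.card_biUnion_le_card_mul _ _ _ herase
    _ ≤ r * (k - 1) := Nat.mul_le_mul_right _ (hreg x)

lemma Z2graph_neighborSet_subset (Z : Finset V) (u : V) :
    (Z2graph E Z).neighborSet u ⊆
      ↑((hyperNbhd E {u}).biUnion fun x => (E.filter (x ∈ ·)).biUnion (· ∩ Z)) := by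
  rintro w ⟨-, -, hwZ, x, hx⟩
  obtain ⟨hxu, hxw⟩ := Finset.mem_inter.1 hx
  obtain ⟨e, he, hxe⟩ := Finset.mem_biUnion.1 (hyperNbhd_singleton_subset w hxw)
  obtain ⟨heE, hwe⟩ := Finset.mem_filter.1 he
  simp only [Finset.coe_biUnion, Set.mem_iUnion]
  exact ⟨x, hxu, e, Finset.mem_filter.2 ⟨heE, Finset.mem_of_mem_erase hxe⟩,
    Finset.mem_inter.2 ⟨hwe, hwZ⟩⟩

noncomputable instance (Z : Finset V) : (Z2graph E Z).LocallyFinite := fun u =>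
  ((Finset.finite_toSet _).subset (Z2graph_neighborSet_subset Z u)).fintype

lemma Z2graph_degree_le {Z : Finset V} (hedge : ∀ e ∈ E, e.card ≤ k)
    (hedgeZ : ∀ e ∈ E, (e ∩ Z).card ≤ 1) (hreg : ∀ v, (E.filter (v ∈ ·)).card ≤ r) (u : V) :
    (Z2graph E Z).degree u ≤ (k - 1) * r ^ 2 := by
  rw [← SimpleGraph.card_neighborFinset_eq_degree]
  calc ((Z2graph E Z).neighborFinset u).card
      ≤ ((hyperNbhd E {u}).biUnion fun x => (E.filter (x ∈ ·)).biUnion (· ∩ Z)).card :=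
        Finset.card_le_card fun w hw => Finset.mem_coe.1 <|
          Z2graph_neighborSet_subset Z u ((SimpleGraph.mem_neighborFinset _ _ _).1 hw)
    _ ≤ (hyperNbhd E {u}).card * (r * 1) :=
        Finset.card_biUnion_le_card_mul _ _ _ fun x _ =>
          (Finset.card_biUnion_le_card_mul _ _ _ fun e he =>
            hedgeZ e (Finset.mem_filter.1 he).1).trans (Nat.mul_le_mul_right _ (hreg x))
    _ ≤ r * (k - 1) * (r * 1) :=
        Nat.mul_le_mul_right _ (card_hyperNbhd_singleton_le hedge hreg u)
    _ = (k - 1) * r ^ 2 := by ring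

end Hypergraph

open Classical in
theorem two_linked_sets_count_le_general
    {V : Type*} [DecidableEq V]
    (k r : ℕ)
    (E : Finset (Finset V)) (parts : Fin k → Finset V)
    (hcover : ∀ v : V, ∃ i, v ∈ parts i)
    (hedge : ∀ e ∈ E, ∀ i, (e ∩ parts i).card = 1)
    (hreg : ∀ v : V, (E.filter fun e => v ∈ e).card = r) :
    ∀ i : Fin k, ∀ v ∈ parts i, ∀ s : ℕ,
      ({S : Finset V | S ⊆ parts i ∧ v ∈ S ∧ S.card = s ∧ S.Nonempty ∧
          ((Z2graph E (parts i)).induce (S : Set V)).Connected}.ncard : ℝ)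
        ≤ Real.exp 1 * ((k - 1) * Real.exp 1 * r ^ 2) ^ (s - 1) := by
  intro i v _ s
  have hdeg := Z2graph_degree_le (Z := parts i)
    (fun e he => Finset.card_le_of_forall_card_inter_le_one parts hcover fun j => (hedge e he j).le)
    (fun e he => (hedge e he i).le) (fun u => (hreg u).le)
  have hk : ((k - 1 : ℕ) : ℝ) = (k : ℝ) - 1 := by
    rw [Nat.cast_sub (by have := i.pos; omega), Nat.cast_one]
  calc _ ≤ ((s * ((k - 1) * r ^ 2)).choose (s - 1) : ℝ) :=
        Nat.cast_le.2 <| (Z2graph E (parts i)).ncard_le_choose_of_connected hdeg v s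
          fun S hS => ⟨hS.2.1, hS.2.2.1, hS.2.2.2.2⟩
    _ ≤ _ := by
        refine (Nat.choose_mul_le_exp_mul_pow s _).trans_eq ?_
        push_cast [hk]
        ring

open Classical in
/-- In an `r`-regular `k`-partite `k`-uniform hypergraph, for every partition class `Z`,
vertex `v ∈ Z` and `s ∈ ℕ`, the number of `2`-linked sets `S ⊆ Z` with `v ∈ S` and
`|S| = s` is at most `e·((k-1)·e·r²)^(s-1)`. -/
theorem two_linked_sets_count_le
    {V : Type*} [Fintype V] [DecidableEq V]
    (k r n : ℕ) (hk : 3 ≤ k)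
    (E : Finset (Finset V)) (parts : Fin k → Finset V)
    (hdisj : ∀ i j : Fin k, i ≠ j → Disjoint (parts i) (parts j))
    (hcover : ∀ v : V, ∃ i, v ∈ parts i)
    (hcard : ∀ i, (parts i).card = n)
    (hedge : ∀ e ∈ E, ∀ i, (e ∩ parts i).card = 1)
    (hreg : ∀ v : V, (E.filter fun e => v ∈ e).card = r) :
    ∀ i : Fin k, ∀ v ∈ parts i, ∀ s : ℕ,
      ({S : Finset V | S ⊆ parts i ∧ v ∈ S ∧ S.card = s ∧ S.Nonempty ∧
          ((Z2graph E (parts i)).induce (S : Set V)).Connected}.ncard : ℝ)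
        ≤ Real.exp 1 * ((k - 1) * Real.exp 1 * r ^ 2) ^ (s - 1) :=
  two_linked_sets_count_le_general k r E parts hcover hedge hreg
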